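/- arXiv:2009.13365 — 2 statements merged into one kernel-verified Lean document; each statement's English description precedes it below -/
import Mathlib

section
/- Let f ∈ ℝ[X] be a univariate polynomial and let Der(f) = (f, f', f'', ..., f^{(deg f)}) be the tuple of its iterated derivatives. For a sign condition σ : Der(f) → {−1, 0, 1}, let R(σ) = { x ∈ ℝ : sign(g(x)) = σ(g) for all g ∈ Der(f) }. Then R(σ) is either empty, a single point, or an open interval. (Thom's Lemma) -/
/-- A set is empty, a singleton, or an open order-convex set. -/
def ThomTri (R : Set ℝ) : Prop :=
  R = ∅ ∨ (∃ a : ℝ, R = {a}) ∨ (IsOpen R ∧ R.OrdConnected)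

lemma thom_sign_between {a b c : ℝ} {t : SignType}
    (ha : SignType.sign a = t) (hc : SignType.sign c = t)
    (h1 : a ≤ b) (h2 : b ≤ c) : SignType.sign b = t := by
  cases t with
  | zero =>
      have ha' : a = 0 := sign_eq_zero_iff.mp ha
      have hc' : c = 0 := sign_eq_zero_iff.mp hc
      exact sign_eq_zero_iff.mpr (le_antisymm (hc' ▸ h2) (ha' ▸ h1))
  | pos =>
      exact sign_eq_one_iff.mpr (lt_of_lt_of_le (sign_eq_one_iff.mp ha) h1)
  | neg =>
      exact sign_eq_neg_one_iff.mpr (lt_of_le_of_lt h2 (sign_eq_neg_one_iff.mp hc))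

/-- Key step: intersecting an open order-convex set on which `f'` has constant sign
with a sign condition on `f` again yields a set of one of the three kinds. -/
lemma thom_step (f : Polynomial ℝ) (I : Set ℝ) (hI : IsOpen I) (hc : I.OrdConnected)
    (s t : SignType) (hs : ∀ x ∈ I, SignType.sign ((Polynomial.derivative f).eval x) = s) :
    ThomTri {x ∈ I | SignType.sign (f.eval x) = t} := by
  set R : Set ℝ := {x ∈ I | SignType.sign (f.eval x) = t} with hR
  have hconv : Convex ℝ I := convex_iff_ordConnected.mpr hc
  have hcont : ContinuousOn (fun x => f.eval x) I := (f.continuous).continuousOn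
  have hderiv : ∀ x ∈ interior I, deriv (fun x => f.eval x) x = (Polynomial.derivative f).eval x := by
    intro x _; exact Polynomial.deriv f
  have hdiff : DifferentiableOn ℝ (fun x => f.eval x) (interior I) :=
    (f.differentiable).differentiableOn
  rcases eq_or_ne s 0 with rfl | hs0
  · -- derivative vanishes on I, so f is constant on I
    have hzero : ∀ x ∈ I, (Polynomial.derivative f).eval x = 0 := by
      intro x hx; exact sign_eq_zero_iff.mp (hs x hx)
    have hmono : MonotoneOn (fun x => f.eval x) I := by
      apply monotoneOn_of_deriv_nonneg hconv hcont hdiff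
      intro x hx
      rw [hderiv x hx, hzero x (interior_subset hx)]
    have hanti : AntitoneOn (fun x => f.eval x) I := by
      apply antitoneOn_of_deriv_nonpos hconv hcont hdiff
      intro x hx
      rw [hderiv x hx, hzero x (interior_subset hx)]
    have hconst : ∀ x ∈ I, ∀ y ∈ I, f.eval x = f.eval y := by
      intro x hx y hy
      rcases le_total x y with h | h
      · exact le_antisymm (hmono hx hy h) (hanti hx hy h)
      · exact le_antisymm (hanti hy hx h) (hmono hy hx h)
    rcases Set.eq_empty_or_nonempty R with h | ⟨x0, hx0I, hx0⟩
    · exact Or.inl h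
    · right; right
      have : R = I := by
        apply Set.Subset.antisymm (fun x hx => hx.1)
        intro y hy
        exact ⟨hy, by rw [hconst y hy x0 hx0I]; exact hx0⟩
      rw [this]; exact ⟨hI, hc⟩
  · -- derivative has constant nonzero sign on I: f strictly monotone or antitone
    have hiord : interior I = I := hI.interior_eq
    have key : ∀ x ∈ I, ∀ y ∈ I, ∀ z ∈ I, x ≤ y → y ≤ z →
        ((f.eval x ≤ f.eval y ∧ f.eval y ≤ f.eval z) ∨
         (f.eval z ≤ f.eval y ∧ f.eval y ≤ f.eval x)) ∧ (x < z → f.eval x ≠ f.eval z) := by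
      intro x hx y hy z hz hxy hyz
      cases s with
      | zero => exact absurd rfl hs0
      | pos =>
          have hmono : StrictMonoOn (fun x => f.eval x) I := by
            apply strictMonoOn_of_deriv_pos hconv hcont
            intro u hu
            rw [hderiv u hu]
            exact sign_eq_one_iff.mp (hs u (interior_subset hu))
          refine ⟨Or.inl ⟨hmono.monotoneOn hx hy hxy, hmono.monotoneOn hy hz hyz⟩, ?_⟩
          intro hlt; exact ne_of_lt (hmono hx hz hlt)
      | neg =>
          have hanti : StrictAntiOn (fun x => f.eval x) I := by
            apply strictAntiOn_of_deriv_neg hconv hcont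
            intro u hu
            rw [hderiv u hu]
            exact sign_eq_neg_one_iff.mp (hs u (interior_subset hu))
          refine ⟨Or.inr ⟨hanti.antitoneOn hy hz hyz, hanti.antitoneOn hx hy hxy⟩, ?_⟩
          intro hlt; exact ne_of_gt (hanti hx hz hlt)
    rcases eq_or_ne t 0 with rfl | ht0
    · -- zero set: at most one point by injectivity
      have : R.Subsingleton := by
        intro x hx y hy
        by_contra hne
        rcases lt_or_gt_of_ne hne with h | h
        · exact (key x hx.1 x hx.1 y hy.1 le_rfl h.le).2 h
            (by rw [sign_eq_zero_iff.mp hx.2, sign_eq_zero_iff.mp hy.2])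
        · exact (key y hy.1 y hy.1 x hx.1 le_rfl h.le).2 h
            (by rw [sign_eq_zero_iff.mp hx.2, sign_eq_zero_iff.mp hy.2])
      rcases this.eq_empty_or_singleton with h | h
      · exact Or.inl h
      · exact Or.inr (Or.inl h)
    · right; right
      constructor
      · -- open
        have : R = I ∩ (fun x => f.eval x) ⁻¹' {y | SignType.sign y = t} := rfl
        rw [this]
        apply hI.inter
        apply IsOpen.preimage f.continuous
        cases t with
        | zero => exact absurd rfl ht0
        | pos =>
            have he : {y : ℝ | SignType.sign y = SignType.pos} = Set.Ioi 0 := by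
              ext y
              exact ⟨fun h => sign_eq_one_iff.mp h, fun h => sign_eq_one_iff.mpr h⟩
            rw [he]; exact isOpen_Ioi
        | neg =>
            have he : {y : ℝ | SignType.sign y = SignType.neg} = Set.Iio 0 := by
              ext y
              exact ⟨fun h => sign_eq_neg_one_iff.mp h, fun h => sign_eq_neg_one_iff.mpr h⟩
            rw [he]; exact isOpen_Iio
      · -- ord-connected
        constructor
        intro x hx z hz y hy
        have hyI : y ∈ I := hc.out hx.1 hz.1 hy
        refine ⟨hyI, ?_⟩
        rcases (key x hx.1 y hyI z hz.1 hy.1 hy.2).1 with ⟨h1, h2⟩ | ⟨h1, h2⟩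
        · exact thom_sign_between hx.2 hz.2 h1 h2
        · exact thom_sign_between hz.2 hx.2 h1 h2

lemma thom_aux (N : ℕ) : ∀ (f : Polynomial ℝ) (σ : ℕ → SignType), f.natDegree ≤ N →
    ThomTri {x : ℝ | ∀ m ≤ N, SignType.sign ((Polynomial.derivative^[m] f).eval x) = σ m} := by
  induction N with
  | zero =>
      intro f σ hdeg
      have hf : f = Polynomial.C (f.coeff 0) :=
        Polynomial.eq_C_of_natDegree_eq_zero (Nat.le_zero.mp hdeg)
      have hset : {x : ℝ | ∀ m ≤ 0, SignType.sign ((Polynomial.derivative^[m] f).eval x) = σ m}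
          = {x ∈ (Set.univ : Set ℝ) | SignType.sign (f.eval x) = σ 0} := by
        ext x
        simp only [Set.mem_setOf_eq, Set.mem_univ, true_and, Nat.le_zero]
        constructor
        · intro h; exact h 0 rfl
        · intro h m hm; subst hm; exact h
      rw [hset]
      apply thom_step f Set.univ isOpen_univ Set.ordConnected_univ 0 (σ 0)
      intro x _
      rw [hf]
      simp
  | succ n ih =>
      intro f σ hdeg
      have hd' : (Polynomial.derivative f).natDegree ≤ n := by
        have := Polynomial.natDegree_derivative_le f
        omega
      have hR' := ih (Polynomial.derivative f) (fun k => σ (k + 1)) hd'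
      set R' : Set ℝ := {x : ℝ | ∀ m ≤ n,
        SignType.sign ((Polynomial.derivative^[m] (Polynomial.derivative f)).eval x) = σ (m + 1)}
        with hR'def
      have hset : {x : ℝ | ∀ m ≤ n + 1, SignType.sign ((Polynomial.derivative^[m] f).eval x) = σ m}
          = {x ∈ R' | SignType.sign (f.eval x) = σ 0} := by
        ext x
        simp only [hR'def, Set.mem_setOf_eq]
        constructor
        · intro h
          refine ⟨fun k hk => ?_, h 0 (Nat.zero_le _)⟩
          rw [← Function.iterate_succ_apply]
          exact h (k + 1) (by omega)
        · rintro ⟨h', h0⟩ m hm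
          cases m with
          | zero => exact h0
          | succ k =>
              rw [Function.iterate_succ_apply]
              exact h' k (by omega)
      rw [hset]
      rcases hR' with h | ⟨a, ha⟩ | ⟨hopen, hord⟩
      · left
        rw [h]
        simp
      · have : {x ∈ R' | SignType.sign (f.eval x) = σ 0} ⊆ {a} := by
          rw [← ha]; exact fun x hx => hx.1
        rcases (Set.subsingleton_singleton.anti this).eq_empty_or_singleton with h | h
        · exact Or.inl h
        · exact Or.inr (Or.inl h)
      · apply thom_step f R' hopen hord (σ 1) (σ 0)
        intro x hx
        exact hx 0 (Nat.zero_le _)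

/-- Thom's Lemma: for a univariate real polynomial `f`, the realization of any sign
condition `σ` on the tuple `Der(f) = (f, f', …, f^{(deg f)})` of iterated derivatives,
`R(σ) = {x ∈ ℝ : sign(f^{(n)}(x)) = σ n for all n ≤ deg f}`, is either empty,
a single point, or an open interval (an open, order-convex subset of ℝ). -/
theorem stmt_4 (f : Polynomial ℝ) (σ : ℕ → SignType) :
    letI R : Set ℝ :=
      {x | ∀ n ≤ f.natDegree, SignType.sign ((Polynomial.derivative^[n] f).eval x) = σ n}
    R = ∅ ∨ (∃ a : ℝ, R = {a}) ∨ (IsOpen R ∧ R.OrdConnected) := by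
  exact thom_aux f.natDegree f σ le_rfl
end

section
/- Let F ⊂ ℝ[X] be a finite set of nonzero univariate polynomials closed under differentiation (for each f ∈ F, either f' ∈ F or f' = 0). Let σ be a sign condition on F with realization R(σ), and let σ̄ be its relaxation (replacing strict signs 1 and −1 by the weak conditions ≥0 and ≤0 respectively) with realization R(σ̄). Then: (a) R(σ) is empty, a point, or an open interval; (b) if R(σ) is empty then R(σ̄) is empty or a point; (c) if R(σ) is a point then R(σ̄) is that same point; (d) if R(σ) is an open interval (a,b) then R(σ̄) is the closed interval [a,b]. -/
open Polynomial Set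

namespace BPR533

/-- weak sign condition -/
def wk (s : SignType) (t : ℝ) : Prop :=
  (s = 0 → t = 0) ∧ (s = 1 → 0 ≤ t) ∧ (s = -1 → t ≤ 0)

lemma wk_neg (s : SignType) (t : ℝ) : wk (-s) (-t) ↔ wk s t := by
  cases s <;> simp [wk]

lemma wk_of_sign {s : SignType} {t : ℝ} (h : SignType.sign t = s) : wk s t := by
  subst h
  refine ⟨fun h => sign_eq_zero_iff.mp h, fun h => (sign_eq_one_iff.mp h).le,
    fun h => (sign_eq_neg_one_iff.mp h).le⟩

def RS (F : Finset (Polynomial ℝ)) (σ : Polynomial ℝ → SignType) : Set ℝ :=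
  {x | ∀ f ∈ F, SignType.sign (f.eval x) = σ f}

def RB (F : Finset (Polynomial ℝ)) (σ : Polynomial ℝ → SignType) : Set ℝ :=
  {x | ∀ f ∈ F, wk (σ f) (f.eval x)}

lemma RS_subset_RB (F : Finset (Polynomial ℝ)) (σ : Polynomial ℝ → SignType) :
    RS F σ ⊆ RB F σ := fun _ hx f hf => wk_of_sign (hx f hf)

/-- a point strictly between two points of the closure of an ord-connected set is in the set -/
lemma betw {R' : Set ℝ} (hc : R'.OrdConnected) {x y z : ℝ} (hx : x ∈ closure R')
    (hy : y ∈ closure R') (h1 : x < z) (h2 : z < y) : z ∈ R' := by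
  obtain ⟨u, hu, hud⟩ := Metric.mem_closure_iff.mp hx (z - x) (by linarith)
  obtain ⟨v, hv, hvd⟩ := Metric.mem_closure_iff.mp hy (y - z) (by linarith)
  rw [Real.dist_eq] at hud hvd
  have h3 := abs_lt.mp hud
  have h4 := abs_lt.mp hvd
  exact hc.out hu hv ⟨by linarith [h3.1], by linarith [h4.2]⟩

/-- a polynomial with positive derivative on an open interval is strictly monotone
on its closure -/
lemma mono_of_deriv_pos {R' : Set ℝ} (hR'o : IsOpen R') (hoc : R'.OrdConnected)
    (q : Polynomial ℝ) (hq : ∀ x ∈ R', 0 < (derivative q).eval x) :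
    StrictMonoOn (fun x => q.eval x) (closure R') := by
  have hconv : Convex ℝ R' := convex_iff_ordConnected.mpr hoc
  have hCc : Convex ℝ (closure R') := hconv.closure
  have hcont : Continuous fun x => q.eval x := q.continuous
  have hmonR : StrictMonoOn (fun x => q.eval x) R' := by
    refine strictMonoOn_of_deriv_pos hconv hcont.continuousOn ?_
    rw [hR'o.interior_eq]
    intro x hx
    rw [Polynomial.deriv]
    exact hq x hx
  have hder_nonneg : ∀ x ∈ closure R', 0 ≤ (derivative q).eval x := by
    intro x hx
    have : closure R' ⊆ closure {y | (0:ℝ) < (derivative q).eval y} :=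
      closure_mono fun y hy => hq y hy
    have h2 := this hx
    have := closure_lt_subset_le (continuous_const) (derivative q).continuous h2
    exact this
  have hmonC : MonotoneOn (fun x => q.eval x) (closure R') := by
    refine monotoneOn_of_deriv_nonneg hCc hcont.continuousOn ?_ ?_
    · intro x _
      exact (q.differentiable.differentiableAt).differentiableWithinAt
    · intro x hx
      rw [Polynomial.deriv]
      exact hder_nonneg x (interior_subset hx)
  intro x hx y hy hxy
  -- pick two points strictly between x and y
  set z1 := x + (y - x) / 3 with hz1
  set z2 := x + 2 * (y - x) / 3 with hz2
  have hx1 : x < z1 := by rw [hz1]; linarith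
  have h12 : z1 < z2 := by rw [hz1, hz2]; linarith
  have h2y : z2 < y := by rw [hz2]; linarith
  have hz1R : z1 ∈ R' := betw hoc hx hy hx1 (lt_trans h12 h2y)
  have hz2R : z2 ∈ R' := betw hoc hx hy (lt_trans hx1 h12) h2y
  calc q.eval x ≤ q.eval z1 := hmonC hx (subset_closure hz1R) hx1.le
    _ < q.eval z2 := hmonR hz1R hz2R h12
    _ ≤ q.eval y := hmonC (subset_closure hz2R) hy h2y.le

/-- Core lemma: behavior of the sign condition of a single strictly monotone function
on an open interval. -/
lemma core {R' : Set ℝ} (hR'o : IsOpen R') (hoc : R'.OrdConnected)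
    {g : ℝ → ℝ} (hg : Continuous g) (hmono : StrictMonoOn g (closure R')) (s : SignType)
    (R T : Set ℝ) (hR : R = {x ∈ R' | SignType.sign (g x) = s})
    (hT : T = {x ∈ closure R' | wk s (g x)}) :
    (R = ∅ → T = ∅ ∨ ∃ a, T = {a}) ∧
    (R.Nonempty → ((∃ a, R = {a}) ∨ (IsOpen R ∧ R.OrdConnected)) ∧ T = closure R) := by
  have hRsub : ∀ x ∈ R, x ∈ R' := by intro x hx; rw [hR] at hx; exact hx.1
  have hinj : InjOn g (closure R') := hmono.injOn
  cases s with
  | zero =>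
    have hR0 : R = {x ∈ R' | g x = 0} := by
      rw [hR]; ext x; simp [sign_eq_zero_iff]
    have hT0 : T = {x ∈ closure R' | g x = 0} := by
      rw [hT]; ext x
      simp only [wk, mem_setOf_eq]
      constructor
      · rintro ⟨h1, h2, -, -⟩; exact ⟨h1, h2 rfl⟩
      · rintro ⟨h1, h2⟩
        exact ⟨h1, fun _ => h2, fun h => by exact absurd h (by decide),
          fun h => by exact absurd h (by decide)⟩
    have hTsub : T.Subsingleton := by
      intro x hx y hy
      rw [hT0] at hx hy
      exact hinj hx.1 hy.1 (by rw [hx.2, hy.2])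
    refine ⟨fun _ => hTsub.eq_empty_or_singleton, ?_⟩
    rintro ⟨a, ha⟩
    have haT : a ∈ T := by
      rw [hT0]
      rw [hR0] at ha
      exact ⟨subset_closure ha.1, ha.2⟩
    have hRT : R ⊆ T := by
      intro x hx; rw [hR0] at hx; rw [hT0]
      exact ⟨subset_closure hx.1, hx.2⟩
    have hRa : R = {a} := by
      apply Subset.antisymm
      · intro x hx; exact hTsub (hRT hx) haT
      · intro x hx; rw [mem_singleton_iff] at hx; subst hx; exact ha
    refine ⟨Or.inl ⟨a, hRa⟩, ?_⟩
    rw [hRa, closure_singleton]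
    apply Subset.antisymm
    · intro x hx; exact hTsub hx haT
    · intro x hx; rw [mem_singleton_iff] at hx; subst hx; exact haT
  | pos =>
    have hR1 : R = R' ∩ {x | 0 < g x} := by
      rw [hR]; ext x; simp [sign_eq_one_iff, Set.mem_sep_iff]
    have hT1 : T = {x ∈ closure R' | 0 ≤ g x} := by
      rw [hT]; ext x
      simp only [wk, mem_setOf_eq]
      constructor
      · rintro ⟨h1, -, h2, -⟩; exact ⟨h1, h2 rfl⟩
      · rintro ⟨h1, h2⟩
        exact ⟨h1, fun h => by exact absurd h (by decide), fun _ => h2,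
          fun h => by exact absurd h (by decide)⟩
    have hRopen : IsOpen R := by
      rw [hR1]; exact hR'o.inter (isOpen_lt continuous_const hg)
    have hRoc : R.OrdConnected := by
      constructor
      intro x hx z hz y hy
      rw [hR1] at hx hz ⊢
      refine ⟨hoc.out hx.1 hz.1 hy, ?_⟩
      calc (0:ℝ) < g x := hx.2
        _ ≤ g y := hmono.monotoneOn (subset_closure hx.1)
            (subset_closure (hoc.out hx.1 hz.1 hy)) hy.1
    -- key: a closure point with positive value forces nearby points of R' into R
    have hkey : ∀ y ∈ closure R', 0 < g y → ∀ O : Set ℝ, IsOpen O → y ∈ O →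
        (O ∩ R).Nonempty := by
      intro y hy hgy O hO hyO
      have hU : IsOpen (O ∩ {x | 0 < g x}) := hO.inter (isOpen_lt continuous_const hg)
      have hyU : y ∈ O ∩ {x | 0 < g x} := ⟨hyO, hgy⟩
      obtain ⟨z, hz1, hz2⟩ := mem_closure_iff.mp hy _ hU hyU
      exact ⟨z, hz1.1, by rw [hR1]; exact ⟨hz2, hz1.2⟩⟩
    constructor
    · intro hRe
      have hTsub : T.Subsingleton := by
        intro x hx y hy
        rw [hT1] at hx hy
        have hx0 : g x = 0 := by
          rcases hx.2.lt_or_eq with h | h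
          · obtain ⟨z, _, hzR⟩ := hkey x hx.1 h univ isOpen_univ (mem_univ x)
            rw [hRe] at hzR; exact absurd hzR (notMem_empty z)
          · exact h.symm
        have hy0 : g y = 0 := by
          rcases hy.2.lt_or_eq with h | h
          · obtain ⟨z, _, hzR⟩ := hkey y hy.1 h univ isOpen_univ (mem_univ y)
            rw [hRe] at hzR; exact absurd hzR (notMem_empty z)
          · exact h.symm
        exact hinj hx.1 hy.1 (by rw [hx0, hy0])
      exact hTsub.eq_empty_or_singleton
    · rintro ⟨x₀, hx₀⟩
      refine ⟨Or.inr ⟨hRopen, hRoc⟩, ?_⟩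
      have hx₀' := hx₀
      rw [hR1] at hx₀'
      apply Subset.antisymm
      · -- T ⊆ closure R
        intro y hy
        rw [hT1] at hy
        rcases hy.2.lt_or_eq with hpos | h0
        · rw [mem_closure_iff]
          intro O hO hyO
          obtain ⟨z, hz1, hz2⟩ := hkey y hy.1 hpos O hO hyO
          exact ⟨z, hz1, hz2⟩
        · -- g y = 0 < g x₀, so y < x₀ and (y, x₀) ⊆ R
          have hyC : y ∈ closure R' := hy.1
          have hx₀C : x₀ ∈ closure R' := subset_closure hx₀'.1
          have hyx : y < x₀ := by
            by_contra h
            push_neg at h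
            have h1 := hmono.monotoneOn hx₀C hyC h
            have h2 : 0 < g x₀ := hx₀'.2
            rw [← h0] at h1
            linarith
          have hIoo : Ioo y x₀ ⊆ R := by
            intro z hz
            have hzR' : z ∈ R' := betw hoc hyC hx₀C hz.1 hz.2
            rw [hR1]
            refine ⟨hzR', ?_⟩
            have := hmono hyC (subset_closure hzR') hz.1
            rw [h0]; exact this
          have : y ∈ closure (Ioo y x₀) := by
            rw [closure_Ioo hyx.ne]
            exact ⟨le_refl y, hyx.le⟩
          exact closure_mono hIoo this
      · -- closure R ⊆ T
        rw [hT1]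
        intro y hy
        constructor
        · exact closure_mono (fun z hz => hRsub z hz) hy
        · have : closure R ⊆ closure {x | 0 < g x} := closure_mono fun z hz => by
            rw [hR1] at hz; exact hz.2
          exact closure_lt_subset_le continuous_const hg (this hy)
  | neg =>
    have hR1 : R = R' ∩ {x | g x < 0} := by
      rw [hR]; ext x; simp [sign_eq_neg_one_iff, Set.mem_sep_iff]
    have hT1 : T = {x ∈ closure R' | g x ≤ 0} := by
      rw [hT]; ext x
      simp only [wk, mem_setOf_eq]
      constructor
      · rintro ⟨h1, -, -, h2⟩; exact ⟨h1, h2 rfl⟩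
      · rintro ⟨h1, h2⟩
        exact ⟨h1, fun h => by exact absurd h (by decide),
          fun h => by exact absurd h (by decide), fun _ => h2⟩
    have hRopen : IsOpen R := by
      rw [hR1]; exact hR'o.inter (isOpen_lt hg continuous_const)
    have hRoc : R.OrdConnected := by
      constructor
      intro x hx z hz y hy
      rw [hR1] at hx hz ⊢
      refine ⟨hoc.out hx.1 hz.1 hy, ?_⟩
      calc g y ≤ g z := hmono.monotoneOn
            (subset_closure (hoc.out hx.1 hz.1 hy)) (subset_closure hz.1) hy.2
        _ < 0 := hz.2
    have hkey : ∀ y ∈ closure R', g y < 0 → ∀ O : Set ℝ, IsOpen O → y ∈ O →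
        (O ∩ R).Nonempty := by
      intro y hy hgy O hO hyO
      have hU : IsOpen (O ∩ {x | g x < 0}) := hO.inter (isOpen_lt hg continuous_const)
      have hyU : y ∈ O ∩ {x | g x < 0} := ⟨hyO, hgy⟩
      obtain ⟨z, hz1, hz2⟩ := mem_closure_iff.mp hy _ hU hyU
      exact ⟨z, hz1.1, by rw [hR1]; exact ⟨hz2, hz1.2⟩⟩
    constructor
    · intro hRe
      have hTsub : T.Subsingleton := by
        intro x hx y hy
        rw [hT1] at hx hy
        have hx0 : g x = 0 := by
          rcases hx.2.lt_or_eq with h | h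
          · obtain ⟨z, _, hzR⟩ := hkey x hx.1 h univ isOpen_univ (mem_univ x)
            rw [hRe] at hzR; exact absurd hzR (notMem_empty z)
          · exact h
        have hy0 : g y = 0 := by
          rcases hy.2.lt_or_eq with h | h
          · obtain ⟨z, _, hzR⟩ := hkey y hy.1 h univ isOpen_univ (mem_univ y)
            rw [hRe] at hzR; exact absurd hzR (notMem_empty z)
          · exact h
        exact hinj hx.1 hy.1 (by rw [hx0, hy0])
      exact hTsub.eq_empty_or_singleton
    · rintro ⟨x₀, hx₀⟩
      refine ⟨Or.inr ⟨hRopen, hRoc⟩, ?_⟩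
      have hx₀' := hx₀
      rw [hR1] at hx₀'
      apply Subset.antisymm
      · intro y hy
        rw [hT1] at hy
        rcases hy.2.lt_or_eq with hneg | h0
        · rw [mem_closure_iff]
          intro O hO hyO
          exact hkey y hy.1 hneg O hO hyO
        · have hyC : y ∈ closure R' := hy.1
          have hx₀C : x₀ ∈ closure R' := subset_closure hx₀'.1
          have hyx : x₀ < y := by
            by_contra h
            push_neg at h
            have h1 := hmono.monotoneOn hyC hx₀C h
            have h2 : g x₀ < 0 := hx₀'.2
            rw [h0] at h1
            linarith
          have hIoo : Ioo x₀ y ⊆ R := by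
            intro z hz
            have hzR' : z ∈ R' := betw hoc hx₀C hyC hz.1 hz.2
            rw [hR1]
            refine ⟨hzR', ?_⟩
            have := hmono (subset_closure hzR') hyC hz.2
            rw [h0] at this; exact this
          have : y ∈ closure (Ioo x₀ y) := by
            rw [closure_Ioo hyx.ne]
            exact ⟨hyx.le, le_refl y⟩
          exact closure_mono hIoo this
      · rw [hT1]
        intro y hy
        constructor
        · exact closure_mono (fun z hz => hRsub z hz) hy
        · have : closure R ⊆ closure {x | g x < 0} := closure_mono fun z hz => by
            rw [hR1] at hz; exact hz.2
          exact closure_lt_subset_le hg continuous_const (this hy)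

/-- Main auxiliary lemma, proved by strong induction on `F`. -/
lemma aux (F : Finset (Polynomial ℝ)) : (0 : Polynomial ℝ) ∉ F →
    (∀ f ∈ F, derivative f ∈ F ∨ derivative f = 0) →
    ∀ σ : Polynomial ℝ → SignType,
    (RS F σ = ∅ → RB F σ = ∅ ∨ ∃ a, RB F σ = {a}) ∧
    ((RS F σ).Nonempty →
      ((∃ a, RS F σ = {a}) ∨ (IsOpen (RS F σ) ∧ (RS F σ).OrdConnected)) ∧
      RB F σ = closure (RS F σ)) := by
  induction F using Finset.strongInduction with
  | _ F ih =>
  intro h0 hder σ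
  rcases F.eq_empty_or_nonempty with rfl | hFne
  · have hRS : RS ∅ σ = univ := by ext x; simp [RS]
    have hRB : RB ∅ σ = univ := by ext x; simp [RB]
    rw [hRS, hRB]
    refine ⟨fun h => absurd h Set.univ_nonempty.ne_empty, fun _ =>
      ⟨Or.inr ⟨isOpen_univ, ordConnected_univ⟩, by rw [closure_univ]⟩⟩
  · obtain ⟨f, hfF, hfmax⟩ := F.exists_max_image Polynomial.natDegree hFne
    set F' := F.erase f with hF'
    have hss : F' ⊂ F := Finset.erase_ssubset hfF
    have h0' : (0 : Polynomial ℝ) ∉ F' := fun h => h0 (Finset.mem_of_mem_erase h)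
    have hf0 : f ≠ 0 := fun h => h0 (h ▸ hfF)
    have hder' : ∀ g ∈ F', derivative g ∈ F' ∨ derivative g = 0 := by
      intro g hg
      rcases hder g (Finset.mem_of_mem_erase hg) with h | h
      · left
        refine Finset.mem_erase.mpr ⟨?_, h⟩
        intro heq
        have hd0 : derivative g ≠ 0 := fun e => h0 (e ▸ heq ▸ h)
        have hnd : g.natDegree ≠ 0 := by
          intro e
          obtain ⟨c, hc⟩ := Polynomial.natDegree_eq_zero.mp e
          rw [← hc, derivative_C] at hd0
          exact hd0 rfl
        have hlt := Polynomial.natDegree_derivative_lt hnd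
        rw [heq] at hlt
        exact absurd (hfmax g (Finset.mem_of_mem_erase hg)) (not_le.mpr hlt)
      · right; exact h
    have IH := ih F' hss h0' hder' σ
    have hRS : RS F σ = RS F' σ ∩ {x | SignType.sign (f.eval x) = σ f} := by
      ext x
      simp only [RS, mem_setOf_eq, mem_inter_iff]
      constructor
      · intro h; exact ⟨fun g hg => h g (Finset.mem_of_mem_erase hg), h f hfF⟩
      · rintro ⟨h1, h2⟩ g hg
        rcases eq_or_ne g f with rfl | hne
        · exact h2
        · exact h1 g (Finset.mem_erase.mpr ⟨hne, hg⟩)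
    have hRB : RB F σ = RB F' σ ∩ {x | wk (σ f) (f.eval x)} := by
      ext x
      simp only [RB, mem_setOf_eq, mem_inter_iff]
      constructor
      · intro h; exact ⟨fun g hg => h g (Finset.mem_of_mem_erase hg), h f hfF⟩
      · rintro ⟨h1, h2⟩ g hg
        rcases eq_or_ne g f with rfl | hne
        · exact h2
        · exact h1 g (Finset.mem_erase.mpr ⟨hne, hg⟩)
    rcases (RS F' σ).eq_empty_or_nonempty with hE | hNe
    · -- R' empty
      have hRSe : RS F σ = ∅ := by
        rw [hRS, hE, empty_inter]
      have hRBsub : RB F σ ⊆ RB F' σ := by rw [hRB]; exact inter_subset_left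
      refine ⟨fun _ => ?_, fun hne => absurd hne (by rw [hRSe]; exact not_nonempty_empty)⟩
      rcases IH.1 hE with h | ⟨a, ha⟩
      · left; rw [← subset_empty_iff, ← h]; exact hRBsub
      · rw [ha] at hRBsub
        exact (subset_singleton_iff_eq.mp hRBsub).imp id (fun h => ⟨a, h⟩)
    · obtain ⟨hshape, hclos⟩ := IH.2 hNe
      rcases hshape with ⟨a, ha⟩ | ⟨hop, hoc⟩
      · -- R' is a single point
        have hRSsub : RS F σ ⊆ {a} := by rw [hRS, ha]; exact inter_subset_left
        have hRBa : RB F' σ = {a} := by rw [hclos, ha, closure_singleton]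
        have hRBsub : RB F σ ⊆ {a} := by rw [hRB, hRBa]; exact inter_subset_left
        refine ⟨fun _ => (subset_singleton_iff_eq.mp hRBsub).imp id (fun h => ⟨a, h⟩), ?_⟩
        rintro ⟨x, hx⟩
        have hxa : x = a := hRSsub hx
        subst hxa
        have hRSx : RS F σ = {x} :=
          Subset.antisymm hRSsub (by intro y hy; rw [mem_singleton_iff] at hy; subst hy; exact hx)
        refine ⟨Or.inl ⟨x, hRSx⟩, ?_⟩
        rw [hRSx, closure_singleton]
        exact Subset.antisymm hRBsub
          (by intro y hy; rw [mem_singleton_iff] at hy; subst hy; exact RS_subset_RB F σ hx)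
      · -- R' is a nonempty open interval
        have hclosC : RB F' σ = closure (RS F' σ) := hclos
        rcases hder f hfF with hfd | hfd
        · -- derivative f ∈ F
          have hfd' : derivative f ∈ F' := by
            refine Finset.mem_erase.mpr ⟨?_, hfd⟩
            intro heq
            have hd0 : derivative f ≠ 0 := fun e => h0 (e ▸ hfd)
            have hnd : f.natDegree ≠ 0 := by
              intro e
              obtain ⟨c, hc⟩ := Polynomial.natDegree_eq_zero.mp e
              rw [← hc, derivative_C] at hd0
              exact hd0 rfl
            have hlt := Polynomial.natDegree_derivative_lt hnd
            rw [heq] at hlt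
            exact absurd rfl (ne_of_lt hlt)
          set p := derivative f with hp
          have hsignp : ∀ x ∈ RS F' σ, SignType.sign (p.eval x) = σ p := fun x hx => hx p hfd'
          cases hσp : σ p with
          | zero =>
            -- p vanishes on an infinite set, contradiction
            exfalso
            obtain ⟨x, hx⟩ := hNe
            obtain ⟨ε, hε, hball⟩ := Metric.isOpen_iff.mp hop x hx
            rw [Real.ball_eq_Ioo] at hball
            have hinf : {y | p.IsRoot y}.Infinite := by
              apply Set.Infinite.mono (s := Ioo (x - ε) (x + ε))
              · intro y hy
                have := hsignp y (hball hy)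
                rw [hσp] at this
                exact sign_eq_zero_iff.mp this
              · exact Set.Ioo_infinite (by linarith)
            have := Polynomial.eq_zero_of_infinite_isRoot p hinf
            exact h0' (this ▸ hfd')
          | pos =>
            have hpos : ∀ x ∈ RS F' σ, 0 < p.eval x := by
              intro x hx
              have := hsignp x hx
              rw [hσp] at this
              exact sign_eq_one_iff.mp this
            have hmono : StrictMonoOn (fun x => f.eval x) (closure (RS F' σ)) :=
              mono_of_deriv_pos hop hoc f hpos
            have hcore := core hop hoc f.continuous hmono (σ f)
              (RS F σ) (RB F σ)
              (by rw [hRS]; ext x; simp [Set.mem_sep_iff, mem_inter_iff])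
              (by rw [hRB, hclosC]; ext x; simp [Set.mem_sep_iff, mem_inter_iff])
            exact hcore
          | neg =>
            have hpos : ∀ x ∈ RS F' σ, 0 < (derivative (-f)).eval x := by
              intro x hx
              have := hsignp x hx
              rw [hσp] at this
              have h2 := sign_eq_neg_one_iff.mp this
              rw [derivative_neg, eval_neg]
              linarith
            have hmono : StrictMonoOn (fun x => (-f).eval x) (closure (RS F' σ)) :=
              mono_of_deriv_pos hop hoc (-f) hpos
            have hcore := core hop hoc (-f).continuous hmono (-(σ f))
              (RS F σ) (RB F σ)
              (by
                rw [hRS]; ext x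
                simp only [Set.mem_sep_iff, mem_inter_iff, mem_setOf_eq, eval_neg]
                rw [Left.sign_neg, neg_inj])
              (by
                rw [hRB, hclosC]; ext x
                simp only [Set.mem_sep_iff, mem_inter_iff, mem_setOf_eq, eval_neg]
                rw [wk_neg])
            exact hcore
        · -- f is a nonzero constant
          have hnd : f.natDegree = 0 := Polynomial.natDegree_eq_zero_of_derivative_eq_zero hfd
          obtain ⟨c, hc⟩ := Polynomial.natDegree_eq_zero.mp hnd
          have hc0 : c ≠ 0 := by
            intro e
            rw [e, map_zero] at hc
            exact hf0 hc.symm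
          have heval : ∀ x : ℝ, f.eval x = c := by intro x; rw [← hc, eval_C]
          by_cases hsc : SignType.sign c = σ f
          · have h1 : {x : ℝ | SignType.sign (f.eval x) = σ f} = univ := by
              ext x; simp [heval, hsc]
            have h2 : {x : ℝ | wk (σ f) (f.eval x)} = univ := by
              ext x
              simp only [mem_setOf_eq, mem_univ, iff_true]
              rw [heval]
              exact wk_of_sign hsc
            have hRSeq : RS F σ = RS F' σ := by rw [hRS, h1, inter_univ]
            have hRBeq : RB F σ = RB F' σ := by rw [hRB, h2, inter_univ]
            rw [hRSeq, hRBeq]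
            exact IH
          · have h1 : RS F σ = ∅ := by
              rw [hRS]
              apply eq_empty_iff_forall_notMem.mpr
              rintro x ⟨-, hx2⟩
              rw [mem_setOf_eq, heval] at hx2
              exact hsc hx2
            have h2 : RB F σ = ∅ := by
              rw [hRB]
              apply eq_empty_iff_forall_notMem.mpr
              rintro x ⟨-, hx2⟩
              rw [mem_setOf_eq, heval] at hx2
              obtain ⟨w1, w2, w3⟩ := hx2
              cases hσf : σ f with
              | zero => exact hc0 (w1 hσf)
              | pos =>
                have hcpos : 0 ≤ c := w2 hσf
                rcases hcpos.lt_or_eq with h | h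
                · exact hsc (by rw [hσf]; exact sign_eq_one_iff.mpr h)
                · exact hc0 h.symm
              | neg =>
                have hcneg : c ≤ 0 := w3 hσf
                rcases hcneg.lt_or_eq with h | h
                · exact hsc (by rw [hσf]; exact sign_eq_neg_one_iff.mpr h)
                · exact hc0 h
            refine ⟨fun _ => Or.inl h2, fun hne => absurd hne ?_⟩
            rw [h1]
            exact not_nonempty_empty

end BPR533

/-- Lemma (Basu–Pollack–Roy 5.33): let `F` be a finite set of nonzero real univariate
polynomials closed under differentiation, `σ` a sign condition on `F` with realization
`R`, and `σ̄` its relaxation with realization `Rbar`.  Then: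
(a) `R` is empty, a point, or an open interval;
(b) if `R` is empty then `Rbar` is empty or a point;
(c) if `R` is a point then `Rbar` is the same point;
(d) if `R` is an open interval `(a,b)` then `Rbar` is the closed interval `[a,b]`. -/
theorem stmt_5 (F : Finset (Polynomial ℝ)) (h0 : (0 : Polynomial ℝ) ∉ F)
    (hder : ∀ f ∈ F, Polynomial.derivative f ∈ F ∨ Polynomial.derivative f = 0)
    (σ : Polynomial ℝ → SignType) :
    letI R : Set ℝ := {x | ∀ f ∈ F, SignType.sign (f.eval x) = σ f}
    letI Rbar : Set ℝ := {x | ∀ f ∈ F,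
      (σ f = 0 → f.eval x = 0) ∧ (σ f = 1 → 0 ≤ f.eval x) ∧ (σ f = -1 → f.eval x ≤ 0)}
    (R = ∅ ∨ (∃ a : ℝ, R = {a}) ∨ (IsOpen R ∧ R.OrdConnected)) ∧
    (R = ∅ → (Rbar = ∅ ∨ ∃ a : ℝ, Rbar = {a})) ∧
    (∀ a : ℝ, R = {a} → Rbar = {a}) ∧
    (∀ a b : ℝ, a < b → R = Set.Ioo a b → Rbar = Set.Icc a b) := by
  have H := BPR533.aux F h0 hder σ
  have hReq : BPR533.RS F σ = {x | ∀ f ∈ F, SignType.sign (f.eval x) = σ f} := rfl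
  have hBeq : BPR533.RB F σ = {x | ∀ f ∈ F,
      (σ f = 0 → f.eval x = 0) ∧ (σ f = 1 → 0 ≤ f.eval x) ∧ (σ f = -1 → f.eval x ≤ 0)} := rfl
  rw [hReq, hBeq] at H
  refine ⟨?_, H.1, ?_, ?_⟩
  · rcases Set.eq_empty_or_nonempty {x | ∀ f ∈ F, SignType.sign (f.eval x) = σ f} with h | h
    · exact Or.inl h
    · exact Or.inr (H.2 h).1
  · intro a ha
    have hne : ({x | ∀ f ∈ F, SignType.sign (f.eval x) = σ f} : Set ℝ).Nonempty := by
      rw [ha]; exact Set.singleton_nonempty a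
    have := (H.2 hne).2
    rw [ha, closure_singleton] at this
    exact this
  · intro a b hab hR
    have hne : ({x | ∀ f ∈ F, SignType.sign (f.eval x) = σ f} : Set ℝ).Nonempty := by
      rw [hR]; exact Set.nonempty_Ioo.mpr hab
    have := (H.2 hne).2
    rw [hR, closure_Ioo hab.ne] at this
    exact this
end
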